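/- arXiv:1205.2983 — 10 statements merged into one kernel-verified Lean document; each statement's English description precedes it below -/
import Mathlib

section
/- Let N = Q_1 ∩ Q_2 ∩ … ∩ Q_k be a minimal primary decomposition of N, where Q_i is p_i-primary (i.e. √(Q_i : M) = p_i) for all i = 1, …, k. Let S = {1, 2, …, k} and let T be a nonempty proper subset of S. Then (⋂_{i∈T} p_i)·(⋂_{i∈S∖T} Q_i) ⊆ ⟨E_M(N)⟩. -/
/-- If `N = Q₁ ∩ ⋯ ∩ Q_k` is a minimal primary decomposition with `Qᵢ`
`pᵢ`-primary, and `T` is a nonempty proper subset of the index set, then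
`(⋂_{i∈T} pᵢ) • (⋂_{i∈S∖T} Qᵢ) ⊆ ⟨E_M(N)⟩`. -/
theorem envelope_contains_prod_of_primary_decomposition
    {R M : Type*} [CommRing R] [IsNoetherianRing R]
    [AddCommGroup M] [Module R M] [Module.Finite R M]
    (N : Submodule R M) (hN : N ≠ ⊤)
    (k : ℕ) (Q : Fin k → Submodule R M) (p : Fin k → Ideal R)
    -- each `Q i` is a primary submodule
    (hprimary : ∀ i, Q i ≠ ⊤ ∧ ∀ (r : R) (m : M), r • m ∈ Q i →
        m ∈ Q i ∨ ∃ n : ℕ, 0 < n ∧ ∀ x : M, r ^ n • x ∈ Q i)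
    -- each `Q i` is `p i`-primary, i.e. `p i = √(Q i : M)`
    (hrad : ∀ i, ((Q i).colon ⊤).radical = p i)
    (hprime : ∀ i, (p i).IsPrime)
    -- the decomposition
    (hdecomp : N = ⨅ i, Q i)
    -- minimality: the primes are pairwise distinct and no component is redundant
    (hdistinct : Function.Injective p)
    (hirr : ∀ j, ¬ (⨅ i, ⨅ _ : i ≠ j, Q i) ≤ Q j)
    (T : Finset (Fin k)) (hT : T.Nonempty) (hTproper : T ≠ Finset.univ) :
    (⨅ i ∈ T, p i) • (⨅ i ∈ Tᶜ, Q i) ≤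
      Submodule.span R {x : M | ∃ (r : R) (m : M) (n : ℕ),
        0 < n ∧ r ^ n • m ∈ N ∧ x = r • m} := by
  rw [Submodule.smul_le]
  intro r hr m hm
  simp only [Submodule.mem_iInf] at hr hm
  apply Submodule.subset_span
  -- choose exponents
  have hre : ∀ i ∈ T, ∃ n : ℕ, r ^ n ∈ (Q i).colon ⊤ := by
    intro i hi
    have := hr i hi
    rw [← hrad i] at this
    exact this
  choose! f hf using hre
  set n : ℕ := (T.sup f) + 1 with hn
  refine ⟨r, m, n, Nat.succ_pos _, ?_, rfl⟩
  rw [hdecomp, Submodule.mem_iInf]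
  intro i
  by_cases hi : i ∈ T
  · have hle : f i ≤ n := le_trans (Finset.le_sup hi) (Nat.le_succ _)
    have : r ^ n = r ^ (n - f i) * r ^ (f i) := by
      rw [← pow_add, Nat.sub_add_cancel hle]
    rw [this, mul_smul]
    exact Submodule.smul_mem _ _ ((Submodule.mem_colon.mp (hf i hi)) m trivial)
  · exact Submodule.smul_mem _ _ (hm i (Finset.mem_compl.mpr hi))
end

section
/- Let N = Q_1 ∩ Q_2 ∩ … ∩ Q_k be a minimal primary decomposition of N, where Q_i is p_i-primary for all i = 1, …, k, and let S = {1, …, k}. Then ⟨E_M(N)⟩ = N + (⋂_{i=1}^k p_i)·M + Σ_{∅ ≠ T ⊊ S} (⋂_{i∈T} p_i)·(⋂_{i∈S∖T} Q_i). -/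
/-!
With `N = ⋂ Qᵢ`, the right-hand side is the join over all `T ⊆ S` of
`(⋂_{i∈T} pᵢ)(⋂_{i∉T} Qᵢ)`, the cases `T = ∅` and `T = S` giving `N` and `(⋂ pᵢ)M`.
If `rⁿm ∈ N`, put `T = {i | r ∈ pᵢ}`: for `i ∉ T` primariness of `Qᵢ` forces `m ∈ Qᵢ`, so `rm`
lies in the `T`-summand. Conversely, `r ∈ ⋂_{i∈T} pᵢ` has a power with `rⁿM ⊆ Qᵢ` for all `i ∈ T`,
hence `rⁿm ∈ N` for every `m ∈ ⋂_{i∉T} Qᵢ`.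
-/

open scoped Pointwise

theorem Ideal.radical_iInf_of_finite {R ι : Type*} [CommSemiring R] [Finite ι]
    (I : ι → Ideal R) : (⨅ i, I i).radical = ⨅ i, (I i).radical := by
  have := Fintype.ofFinite ι
  rw [← Finset.inf_univ_eq_iInf, ← Finset.inf_univ_eq_iInf, ← Ideal.radicalInfTopHom_apply,
    map_finset_inf]
  rfl

theorem Finset.iSup_eq_sup_empty_sup_univ_sup {α ι : Type*} [CompleteLattice α] [Fintype ι]
    (f : Finset ι → α) :
    ⨆ T, f T = f ∅ ⊔ f univ ⊔ ⨆ T ∈ {T : Finset ι | T.Nonempty ∧ T ≠ univ}, f T := by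
  refine le_antisymm (iSup_le fun T => ?_) (sup_le (sup_le (le_iSup f _) (le_iSup f _))
    (iSup₂_le fun T _ => le_iSup f T))
  rcases T.eq_empty_or_nonempty with rfl | hT
  · exact le_sup_left.trans le_sup_left
  by_cases hTu : T = univ
  · subst hTu
    exact le_sup_right.trans le_sup_left
  exact (le_iSup₂ (f := fun T (_ : T ∈ {T : Finset ι | T.Nonempty ∧ T ≠ univ}) => f T) T
    ⟨hT, hTu⟩).trans le_sup_right

namespace Submodule

variable {R M : Type*} [CommRing R] [AddCommGroup M] [Module R M]

def envelope (N : Submodule R M) : Set M :=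
  {x | ∃ (r : R) (m : M) (n : ℕ), 0 < n ∧ r ^ n • m ∈ N ∧ x = r • m}

theorem isPrimary_iff_forall_exists_pow_smul_mem {S : Submodule R M} :
    S.IsPrimary ↔ S ≠ ⊤ ∧ ∀ (r : R) (m : M), r • m ∈ S →
      m ∈ S ∨ ∃ n : ℕ, 0 < n ∧ ∀ x : M, r ^ n • x ∈ S := by
  have pow_smul_top_le (r : R) (n : ℕ) :
      r ^ n • (⊤ : Submodule R M) ≤ S ↔ ∀ x : M, r ^ n • x ∈ S := by
    simp [← mem_colon_iff_le, mem_colon]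
  refine and_congr_right fun _ => ⟨fun h r m hrm => ?_, fun h r m hrm => ?_⟩
  · refine (h hrm).imp_right fun ⟨n, hn⟩ => ⟨n + 1, n.succ_pos, fun x => ?_⟩
    rw [pow_succ', mul_smul]
    exact S.smul_mem r ((pow_smul_top_le r n).mp hn x)
  · exact (h r m hrm).imp_right fun ⟨n, _, hn⟩ => ⟨n, (pow_smul_top_le r n).mpr hn⟩

theorem IsPrimary.mem_of_pow_smul_mem {S : Submodule R M} (hS : S.IsPrimary) {r : R} {m : M}
    {n : ℕ} (h : r ^ n • m ∈ S) (hr : r ∉ (S.colon Set.univ).radical) : m ∈ S :=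
  (hS.mem_or_mem h).resolve_right (mt Ideal.mem_radical_of_pow_mem hr)

theorem smul_mem_span_envelope {N : Submodule R M} {r : R} {m : M} {n : ℕ} (hn : 0 < n)
    (h : r ^ n • m ∈ N) : r • m ∈ span R N.envelope :=
  subset_span ⟨r, m, n, hn, h, rfl⟩

theorem smul_le_span_envelope {N P : Submodule R M} {I : Ideal R}
    (hI : I ≤ (N.colon P).radical) : I • P ≤ span R N.envelope := by
  refine smul_le.mpr fun r hr m hm => ?_
  obtain ⟨n, hn⟩ := hI hr
  refine smul_mem_span_envelope n.succ_pos (?_ : r ^ (n + 1) • m ∈ N)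
  rw [pow_succ', mul_smul]
  exact N.smul_mem r (mem_colon.mp hn m hm)

section Decomposition

variable {ι : Type*} [Fintype ι] [DecidableEq ι] {Q : ι → Submodule R M} {p : ι → Ideal R}

theorem biInf_le_radical_colon_iInf (hp : ∀ i, p i ≤ ((Q i).colon Set.univ).radical)
    (T : Finset ι) : ⨅ i ∈ T, p i ≤ ((⨅ i, Q i).colon (⨅ i ∈ Tᶜ, Q i : Submodule R M)).radical := by
  rw [iInf_colon, Ideal.radical_iInf_of_finite]
  refine le_iInf fun i => ?_
  by_cases hi : i ∈ T
  · exact (biInf_le p hi).trans <| (hp i).trans <|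
      Ideal.radical_mono (colon_mono le_rfl (Set.subset_univ _))
  · have : (Q i).colon (⨅ i ∈ Tᶜ, Q i : Submodule R M) = ⊤ :=
      (colon_eq_top_iff_subset _).mpr (biInf_le Q (Finset.mem_compl.mpr hi))
    rw [this, Ideal.radical_top]
    exact le_top

theorem span_envelope_iInf_le (hQ : ∀ i, (Q i).IsPrimary)
    (hp : ∀ i, ((Q i).colon Set.univ).radical ≤ p i) :
    span R (⨅ i, Q i).envelope ≤ ⨆ T : Finset ι, (⨅ i ∈ T, p i) • (⨅ i ∈ Tᶜ, Q i) := by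
  classical
  refine span_le.mpr ?_
  rintro _ ⟨r, m, n, -, hrm, rfl⟩
  let T := Finset.univ.filter (r ∈ p ·)
  have hr : r ∈ ⨅ i ∈ T, p i := by
    simp only [mem_iInf]
    exact fun i hi => (Finset.mem_filter.mp hi).2
  have hm : m ∈ ⨅ i ∈ Tᶜ, Q i := by
    simp only [mem_iInf]
    refine fun i hi => (hQ i).mem_of_pow_smul_mem ((mem_iInf Q).mp hrm i) fun h => ?_
    simp [T, hp i h] at hi
  exact le_iSup (fun T : Finset ι => (⨅ i ∈ T, p i) • (⨅ i ∈ Tᶜ, Q i)) T (smul_mem_smul hr hm)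

theorem span_envelope_iInf_eq (hQ : ∀ i, (Q i).IsPrimary)
    (hp : ∀ i, ((Q i).colon Set.univ).radical = p i) :
    span R (⨅ i, Q i).envelope = ⨆ T : Finset ι, (⨅ i ∈ T, p i) • (⨅ i ∈ Tᶜ, Q i) :=
  le_antisymm (span_envelope_iInf_le hQ fun i => (hp i).le)
    (iSup_le fun T => smul_le_span_envelope (biInf_le_radical_colon_iInf (fun i => (hp i).ge) T))

end Decomposition

end Submodule

theorem envelope_eq_of_primary_decomposition_general
    {R M : Type*} [CommRing R]
    [AddCommGroup M] [Module R M]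
    (N : Submodule R M)
    (k : ℕ) (Q : Fin k → Submodule R M) (p : Fin k → Ideal R)
    -- each `Q i` is a primary submodule
    (hprimary : ∀ i, Q i ≠ ⊤ ∧ ∀ (r : R) (m : M), r • m ∈ Q i →
        m ∈ Q i ∨ ∃ n : ℕ, 0 < n ∧ ∀ x : M, r ^ n • x ∈ Q i)
    -- each `Q i` is `p i`-primary, i.e. `p i = √(Q i : M)`
    (hrad : ∀ i, ((Q i).colon ⊤).radical = p i)
    -- the decomposition
    (hdecomp : N = ⨅ i, Q i) :
    Submodule.span R {x : M | ∃ (r : R) (m : M) (n : ℕ),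
        0 < n ∧ r ^ n • m ∈ N ∧ x = r • m}
      = N ⊔ (⨅ i, p i) • (⊤ : Submodule R M)
        ⊔ ⨆ T ∈ {T : Finset (Fin k) | T.Nonempty ∧ T ≠ Finset.univ},
            (⨅ i ∈ T, p i) • (⨅ i ∈ Tᶜ, Q i) := by
  subst hdecomp
  have hQ i : (Q i).IsPrimary := Submodule.isPrimary_iff_forall_exists_pow_smul_mem.mpr (hprimary i)
  refine (Submodule.span_envelope_iInf_eq hQ hrad).trans ?_
  rw [Finset.iSup_eq_sup_empty_sup_univ_sup]
  simp

/-- If `N = Q₁ ∩ ⋯ ∩ Q_k` is a minimal primary decomposition with `Qᵢ`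
`pᵢ`-primary, then
`⟨E_M(N)⟩ = N + (⋂ᵢ pᵢ)M + Σ_{∅ ≠ T ⊊ S} (⋂_{i∈T} pᵢ)(⋂_{i∈S∖T} Qᵢ)`. -/
theorem envelope_eq_of_primary_decomposition
    {R M : Type*} [CommRing R] [IsNoetherianRing R]
    [AddCommGroup M] [Module R M] [Module.Finite R M]
    (N : Submodule R M) (hN : N ≠ ⊤)
    (k : ℕ) (Q : Fin k → Submodule R M) (p : Fin k → Ideal R)
    -- each `Q i` is a primary submodule
    (hprimary : ∀ i, Q i ≠ ⊤ ∧ ∀ (r : R) (m : M), r • m ∈ Q i →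
        m ∈ Q i ∨ ∃ n : ℕ, 0 < n ∧ ∀ x : M, r ^ n • x ∈ Q i)
    -- each `Q i` is `p i`-primary, i.e. `p i = √(Q i : M)`
    (hrad : ∀ i, ((Q i).colon ⊤).radical = p i)
    (hprime : ∀ i, (p i).IsPrime)
    -- the decomposition
    (hdecomp : N = ⨅ i, Q i)
    -- minimality: the primes are pairwise distinct and no component is redundant
    (hdistinct : Function.Injective p)
    (hirr : ∀ j, ¬ (⨅ i, ⨅ _ : i ≠ j, Q i) ≤ Q j) :
    Submodule.span R {x : M | ∃ (r : R) (m : M) (n : ℕ),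
        0 < n ∧ r ^ n • m ∈ N ∧ x = r • m}
      = N ⊔ (⨅ i, p i) • (⊤ : Submodule R M)
        ⊔ ⨆ T ∈ {T : Finset (Fin k) | T.Nonempty ∧ T ≠ Finset.univ},
            (⨅ i ∈ T, p i) • (⨅ i ∈ Tᶜ, Q i) :=
  envelope_eq_of_primary_decomposition_general N k Q p hprimary hrad hdecomp
end

section
/- If N is a p-primary submodule of M, then ⟨E_M(N)⟩ = N + pM. -/
/-- If `N` is a `p`-primary submodule of `M`, then `⟨E_M(N)⟩ = N + pM`. -/
theorem envelope_of_primary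
    {R M : Type*} [CommRing R] [IsNoetherianRing R]
    [AddCommGroup M] [Module R M] [Module.Finite R M]
    (N : Submodule R M) (hN : N ≠ ⊤) (p : Ideal R)
    -- `N` is a primary submodule
    (hprimary : ∀ (r : R) (m : M), r • m ∈ N →
        m ∈ N ∨ ∃ n : ℕ, 0 < n ∧ ∀ x : M, r ^ n • x ∈ N)
    -- `N` is `p`-primary, i.e. `p = √(N : M)`
    (hrad : (N.colon ⊤).radical = p) :
    Submodule.span R {x : M | ∃ (r : R) (m : M) (n : ℕ),
        0 < n ∧ r ^ n • m ∈ N ∧ x = r • m}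
      = N ⊔ p • (⊤ : Submodule R M) := by
  apply le_antisymm
  · rw [Submodule.span_le]
    rintro x ⟨r, m, n, hn, hrm, rfl⟩
    rcases hprimary (r ^ n) m hrm with hm | ⟨k, hk, hall⟩
    · exact Submodule.mem_sup_left (N.smul_mem r hm)
    · have hr : r ∈ p := by
        rw [← hrad]
        refine ⟨n * k, ?_⟩
        rw [Submodule.mem_colon]
        intro q _
        rw [pow_mul]
        exact hall q
      exact Submodule.mem_sup_right (Submodule.smul_mem_smul hr trivial)
  · rw [sup_le_iff]
    constructor
    · intro m hm
      exact Submodule.subset_span ⟨1, m, 1, one_pos, by simpa using hm, by simp⟩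
    · rw [Submodule.smul_le]
      intro r hr m _
      rw [← hrad] at hr
      obtain ⟨n, hn⟩ := hr
      refine Submodule.subset_span ⟨r, m, n + 1, Nat.succ_pos n, ?_, rfl⟩
      have h2 : r ^ (n + 1) ∈ N.colon ⊤ := by
        rw [pow_succ']; exact Ideal.mul_mem_left _ r hn
      exact Submodule.mem_colon.mp h2 m trivial
end

section
/- If N is a weakly prime submodule of M, then ⟨E_M(N)⟩ = N. -/
/-- If `N` is a weakly prime submodule of `M`, then `⟨E_M(N)⟩ = N`. -/
theorem envelope_of_weakly_prime
    {R M : Type*} [CommRing R] [AddCommGroup M] [Module R M]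
    (N : Submodule R M) (hN : N ≠ ⊤)
    -- `N` is weakly prime
    (hwp : ∀ (a b : R) (m : M), (a * b) • m ∈ N → a • m ∈ N ∨ b • m ∈ N) :
    Submodule.span R {x : M | ∃ (r : R) (m : M) (t : ℕ),
        0 < t ∧ r ^ t • m ∈ N ∧ x = r • m} = N := by
  have key : ∀ t : ℕ, 0 < t → ∀ (r : R) (m : M), r ^ t • m ∈ N → r • m ∈ N := by
    intro t
    induction t with
    | zero => intro h; exact absurd h (lt_irrefl 0)
    | succ n ih =>
      intro _ r m hm
      rcases Nat.eq_zero_or_pos n with h0 | hpos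
      · subst h0; simpa using hm
      · rw [pow_succ, mul_comm] at hm
        rcases hwp r (r ^ n) m hm with h | h
        · exact h
        · exact ih hpos r m h
  apply le_antisymm
  · rw [Submodule.span_le]
    rintro x ⟨r, m, t, ht, hmem, rfl⟩
    exact key t ht r m hmem
  · intro x hx
    exact Submodule.subset_span ⟨1, x, 1, one_pos, by simpa using hx, (one_smul R x).symm⟩
end

section
/- Suppose N = Q_1 ∩ Q_2 ∩ … ∩ Q_s is a minimal primary decomposition where each Q_i is p_i-primary and the primes form a chain p_1 ⊂ p_2 ⊂ … ⊂ p_s. If ⟨E_M(N)⟩ = N, then N is a weakly prime submodule of M. -/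
/-- Suppose `N = Q₁ ∩ ⋯ ∩ Q_s` is a minimal primary decomposition where
each `Qᵢ` is `pᵢ`-primary and `p₁ ⊂ p₂ ⊂ ⋯ ⊂ p_s` is a strict chain. If `⟨E_M(N)⟩ = N`,
then `N` is a weakly prime submodule of `M`. -/
theorem weakly_prime_of_chain_primary_decomposition
    {R M : Type*} [CommRing R] [IsNoetherianRing R]
    [AddCommGroup M] [Module R M] [Module.Finite R M]
    (N : Submodule R M) (hN : N ≠ ⊤)
    (s : ℕ) (Q : Fin s → Submodule R M) (p : Fin s → Ideal R)
    -- each `Q i` is a primary submodule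
    (hprimary : ∀ i, Q i ≠ ⊤ ∧ ∀ (r : R) (m : M), r • m ∈ Q i →
        m ∈ Q i ∨ ∃ t : ℕ, 0 < t ∧ ∀ x : M, r ^ t • x ∈ Q i)
    -- each `Q i` is `p i`-primary, i.e. `p i = √(Q i : M)`
    (hrad : ∀ i, ((Q i).colon ⊤).radical = p i)
    (hprime : ∀ i, (p i).IsPrime)
    -- the decomposition
    (hdecomp : N = ⨅ i, Q i)
    -- minimality: no component is redundant
    (hirr : ∀ j, ¬ (⨅ i, ⨅ _ : i ≠ j, Q i) ≤ Q j)
    -- the primes form a strict chain `p₁ ⊂ p₂ ⊂ ⋯ ⊂ p_s`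
    (hchain : ∀ i j : Fin s, i < j → p i < p j)
    -- the envelope of `N` generates `N`
    (henv : Submodule.span R {x : M | ∃ (r : R) (m : M) (t : ℕ),
        0 < t ∧ r ^ t • m ∈ N ∧ x = r • m} = N) :
    N ≠ ⊤ ∧ ∀ (a b : R) (m : M), (a * b) • m ∈ N → a • m ∈ N ∨ b • m ∈ N := by
  classical
  refine ⟨hN, fun a b m habm => ?_⟩
  have hQ : ∀ i, (a * b) • m ∈ Q i := by
    rw [hdecomp, Submodule.mem_iInf] at habm
    exact habm
  set S : Finset (Fin s) := Finset.univ.filter (fun i => m ∉ Q i) with hSdef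
  by_cases hS : S.Nonempty
  · set i₀ := S.min' hS with hi₀
    have hi₀S : i₀ ∈ S := S.min'_mem hS
    -- for every i in S, a*b ∈ p i
    have hab : (a * b) ∈ p i₀ := by
      have hm : m ∉ Q i₀ := by
        have := Finset.mem_filter.mp hi₀S
        exact this.2
      rcases (hprimary i₀).2 (a * b) m (hQ i₀) with h | ⟨t, ht, hx⟩
      · exact absurd h hm
      · rw [← hrad i₀]
        exact ⟨t, Submodule.mem_colon.mpr (fun q _ => hx q)⟩
    have key : ∀ c : R, c ∈ p i₀ → c • m ∈ N := by
      intro c hc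
      have hc' : ∀ i, ∃ n : ℕ, c ^ n • m ∈ Q i := by
        intro i
        by_cases hi : i ∈ S
        · have hle : p i₀ ≤ p i := by
            rcases lt_or_eq_of_le (S.min'_le i hi) with h | h
            · exact (hchain i₀ i h).le
            · exact le_of_eq (congrArg p (hi₀.trans h))
          have hcr : c ∈ ((Q i).colon ⊤).radical := by
            rw [hrad i]; exact hle hc
          obtain ⟨n, hn⟩ := hcr
          exact ⟨n, Submodule.mem_colon.mp hn m trivial⟩
        · refine ⟨0, ?_⟩
          have : m ∈ Q i := by
            by_contra hm
            exact hi (Finset.mem_filter.mpr ⟨Finset.mem_univ i, hm⟩)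
          simpa using this
      choose n hn using hc'
      set T : ℕ := Finset.univ.sup n + 1 with hT
      have hTmem : c ^ T • m ∈ N := by
        rw [hdecomp, Submodule.mem_iInf]
        intro i
        have hni : n i ≤ T := le_trans (Finset.le_sup (Finset.mem_univ i)) (Nat.le_succ _)
        have : c ^ T = c ^ (T - n i) * c ^ (n i) := by
          rw [← pow_add, Nat.sub_add_cancel hni]
        rw [this, mul_smul]
        exact Submodule.smul_mem _ _ (hn i)
      have : c • m ∈ Submodule.span R {x : M | ∃ (r : R) (m : M) (t : ℕ),
          0 < t ∧ r ^ t • m ∈ N ∧ x = r • m} :=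
        Submodule.subset_span ⟨c, m, T, Nat.succ_pos _, hTmem, rfl⟩
      rwa [henv] at this
    rcases (hprime i₀).mem_or_mem hab with h | h
    · exact Or.inl (key a h)
    · exact Or.inr (key b h)
  · left
    have hm : m ∈ N := by
      rw [hdecomp, Submodule.mem_iInf]
      intro i
      by_contra hmi
      exact hS ⟨i, Finset.mem_filter.mpr ⟨Finset.mem_univ i, hmi⟩⟩
    exact Submodule.smul_mem _ _ hm
end

section
/- Let Q be a weakly primary submodule of M. If ⟨E_M(Q)⟩ = Q, then Q is weakly prime. -/
/-- Let `Q` be a weakly primary submodule of `M`. If `⟨E_M(Q)⟩ = Q`, then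
`Q` is weakly prime. -/
theorem weakly_prime_of_weakly_primary_envelope_eq
    {R M : Type*} [CommRing R] [IsNoetherianRing R]
    [AddCommGroup M] [Module R M] [Module.Finite R M]
    (Q : Submodule R M) (hQ : Q ≠ ⊤)
    -- `Q` is weakly primary
    (hwp : ∀ (a b : R) (m : M), (a * b) • m ∈ Q →
        b • m ∈ Q ∨ ∃ t : ℕ, 0 < t ∧ a ^ t • m ∈ Q)
    -- the envelope of `Q` generates `Q`
    (henv : Submodule.span R {x : M | ∃ (r : R) (m : M) (t : ℕ),
        0 < t ∧ r ^ t • m ∈ Q ∧ x = r • m} = Q) :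
    Q ≠ ⊤ ∧ ∀ (a b : R) (m : M), (a * b) • m ∈ Q → a • m ∈ Q ∨ b • m ∈ Q := by
  refine ⟨hQ, fun a b m h => ?_⟩
  rcases hwp a b m h with hb | ⟨t, ht, hat⟩
  · exact Or.inr hb
  · left
    rw [← henv]
    exact Submodule.subset_span ⟨a, m, t, ht, hat, rfl⟩
end

section
/- Let N = Q_1 ∩ Q_2 be a minimal primary decomposition of N where Q_i is p_i-primary for i = 1, 2. If ⟨E_M(N)⟩ = N, then either Q_1 and Q_2 are both prime submodules, or N is a weakly prime submodule. -/
private lemma weakAux {R M : Type*} [CommRing R] [AddCommGroup M] [Module R M]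
    (N Q₁ Q₂ : Submodule R M) (p₁ p₂ : Ideal R)
    (hp₁ : ∀ (r : R) (m : M), r • m ∈ Q₁ →
        m ∈ Q₁ ∨ ∃ t : ℕ, 0 < t ∧ ∀ x : M, r ^ t • x ∈ Q₁)
    (hp₂ : ∀ (r : R) (m : M), r • m ∈ Q₂ →
        m ∈ Q₂ ∨ ∃ t : ℕ, 0 < t ∧ ∀ x : M, r ^ t • x ∈ Q₂)
    (memp₁ : ∀ r : R, r ∈ p₁ ↔ ∃ n : ℕ, ∀ x : M, r ^ n • x ∈ Q₁)
    (memp₂ : ∀ r : R, r ∈ p₂ ↔ ∃ n : ℕ, ∀ x : M, r ^ n • x ∈ Q₂)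
    (hle : p₁ ≤ p₂) (hdecomp : N = Q₁ ⊓ Q₂)
    (star : ∀ (r : R) (m : M) (t : ℕ), 0 < t → r ^ t • m ∈ N → r • m ∈ N) :
    ∀ (a b : R) (m : M), (a * b) • m ∈ N → a • m ∈ N ∨ b • m ∈ N := by
  intro a b m h
  by_contra hc
  push_neg at hc
  obtain ⟨ha, hb⟩ := hc
  have h₁ : (a * b) • m ∈ Q₁ := (hdecomp ▸ h).1
  have h₂ : (a * b) • m ∈ Q₂ := (hdecomp ▸ h).2
  -- neither a nor b is in p₁
  have notp₁ : ∀ c : R, c ∈ p₁ → ¬ c • m ∉ N := by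
    intro c hc1 hcm
    obtain ⟨n₁, hn₁⟩ := (memp₁ c).mp hc1
    obtain ⟨n₂, hn₂⟩ := (memp₂ c).mp (hle hc1)
    have hmem : c ^ (n₁ + n₂ + 1) • m ∈ N := by
      rw [hdecomp]
      constructor
      · have : c ^ (n₁ + n₂ + 1) • m = (c ^ (n₂ + 1)) • (c ^ n₁ • m) := by
          rw [smul_smul]; congr 1; ring
        rw [this]; exact Submodule.smul_mem _ _ (hn₁ m)
      · have : c ^ (n₁ + n₂ + 1) • m = (c ^ (n₁ + 1)) • (c ^ n₂ • m) := by
          rw [smul_smul]; congr 1; ring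
        rw [this]; exact Submodule.smul_mem _ _ (hn₂ m)
    exact hcm (star c m (n₁ + n₂ + 1) (Nat.succ_pos _) hmem)
  have ha1 : a ∉ p₁ := fun hx => notp₁ a hx ha
  have hb1 : b ∉ p₁ := fun hx => notp₁ b hx hb
  -- a • m and b • m are in Q₁
  have hbm₁ : b • m ∈ Q₁ := by
    have := hp₁ a (b • m) (by rwa [smul_smul])
    rcases this with h' | ⟨t, _, ht⟩
    · exact h'
    · exact absurd ((memp₁ a).mpr ⟨t, ht⟩) ha1
  have ham₁ : a • m ∈ Q₁ := by
    have := hp₁ b (a • m) (by rw [smul_smul, mul_comm]; exact h₁)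
    rcases this with h' | ⟨t, _, ht⟩
    · exact h'
    · exact absurd ((memp₁ b).mpr ⟨t, ht⟩) hb1
  -- a ∈ p₂
  have ha2 : a ∈ p₂ := by
    have := hp₂ a (b • m) (by rwa [smul_smul])
    rcases this with h' | ⟨t, _, ht⟩
    · exact absurd (hdecomp ▸ ⟨hbm₁, h'⟩ : b • m ∈ N) hb
    · exact (memp₂ a).mpr ⟨t, ht⟩
  obtain ⟨n, hn⟩ := (memp₂ a).mp ha2
  have hmem : a ^ (n + 1) • m ∈ N := by
    rw [hdecomp]
    constructor
    · have : a ^ (n + 1) • m = (a ^ n) • (a • m) := by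
        rw [smul_smul]; congr 1; ring
      rw [this]; exact Submodule.smul_mem _ _ ham₁
    · have : a ^ (n + 1) • m = a • (a ^ n • m) := by
        rw [smul_smul]; congr 1; ring
      rw [this]; exact Submodule.smul_mem _ _ (hn m)
  exact ha (star a m (n + 1) (Nat.succ_pos _) hmem)

private lemma primeAux {R M : Type*} [CommRing R] [AddCommGroup M] [Module R M]
    (N Q₁ Q₂ : Submodule R M) (p₁ p₂ : Ideal R)
    (hp₁ : ∀ (r : R) (m : M), r • m ∈ Q₁ →
        m ∈ Q₁ ∨ ∃ t : ℕ, 0 < t ∧ ∀ x : M, r ^ t • x ∈ Q₁)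
    (memp₁ : ∀ r : R, r ∈ p₁ ↔ ∃ n : ℕ, ∀ x : M, r ^ n • x ∈ Q₁)
    (memp₂ : ∀ r : R, r ∈ p₂ ↔ ∃ n : ℕ, ∀ x : M, r ^ n • x ∈ Q₂)
    (s : R) (hs₂ : s ∈ p₂) (hs₁ : s ∉ p₁)
    (hdecomp : N = Q₁ ⊓ Q₂)
    (star : ∀ (r : R) (m : M) (t : ℕ), 0 < t → r ^ t • m ∈ N → r • m ∈ N) :
    ∀ (r : R) (m : M), r • m ∈ Q₁ → m ∈ Q₁ ∨ ∀ x : M, r • x ∈ Q₁ := by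
  intro r m hrm
  rcases hp₁ r m hrm with h | ⟨t, ht, hT⟩
  · exact Or.inl h
  right
  intro x
  obtain ⟨j, hj⟩ := (memp₂ s).mp hs₂
  have hmem : (r * s) ^ (t + j) • x ∈ N := by
    rw [hdecomp]
    constructor
    · have : (r * s) ^ (t + j) • x = (s ^ (t + j) * r ^ j) • (r ^ t • x) := by
        rw [smul_smul]; congr 1; ring
      rw [this]; exact Submodule.smul_mem _ _ (hT x)
    · have : (r * s) ^ (t + j) • x = (r ^ (t + j) * s ^ t) • (s ^ j • x) := by
        rw [smul_smul]; congr 1; ring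
      rw [this]; exact Submodule.smul_mem _ _ (hj x)
  have hrs : (r * s) • x ∈ N := star (r * s) x (t + j) (Nat.lt_of_lt_of_le ht (Nat.le_add_right _ _)) hmem
  have hsrx : s • (r • x) ∈ Q₁ := by
    rw [smul_smul, mul_comm]; exact (hdecomp ▸ hrs).1
  rcases hp₁ s (r • x) hsrx with h' | ⟨k, _, hk⟩
  · exact h'
  · exact absurd ((memp₁ s).mpr ⟨k, hk⟩) hs₁

/-- Let `N = Q₁ ∩ Q₂` be a minimal primary decomposition with `Qᵢ`
`pᵢ`-primary. If `⟨E_M(N)⟩ = N`, then either `Q₁` and `Q₂` are both prime submodules or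
`N` is weakly prime. -/
theorem prime_or_weakly_prime_of_two_component_decomposition
    {R M : Type*} [CommRing R] [IsNoetherianRing R]
    [AddCommGroup M] [Module R M] [Module.Finite R M]
    (N : Submodule R M) (hN : N ≠ ⊤)
    (Q₁ Q₂ : Submodule R M) (p₁ p₂ : Ideal R)
    -- `Q₁` and `Q₂` are primary submodules
    (hprimary₁ : Q₁ ≠ ⊤ ∧ ∀ (r : R) (m : M), r • m ∈ Q₁ →
        m ∈ Q₁ ∨ ∃ t : ℕ, 0 < t ∧ ∀ x : M, r ^ t • x ∈ Q₁)
    (hprimary₂ : Q₂ ≠ ⊤ ∧ ∀ (r : R) (m : M), r • m ∈ Q₂ →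
        m ∈ Q₂ ∨ ∃ t : ℕ, 0 < t ∧ ∀ x : M, r ^ t • x ∈ Q₂)
    -- `Qᵢ` is `pᵢ`-primary, i.e. `pᵢ = √(Qᵢ : M)`
    (hrad₁ : (Q₁.colon ⊤).radical = p₁) (hrad₂ : (Q₂.colon ⊤).radical = p₂)
    (hprime₁ : p₁.IsPrime) (hprime₂ : p₂.IsPrime)
    -- the decomposition and its minimality
    (hdecomp : N = Q₁ ⊓ Q₂)
    (hdistinct : p₁ ≠ p₂) (hirr₁ : ¬ Q₂ ≤ Q₁) (hirr₂ : ¬ Q₁ ≤ Q₂)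
    -- the envelope of `N` generates `N`
    (henv : Submodule.span R {x : M | ∃ (r : R) (m : M) (t : ℕ),
        0 < t ∧ r ^ t • m ∈ N ∧ x = r • m} = N) :
    ((∀ (r : R) (m : M), r • m ∈ Q₁ → m ∈ Q₁ ∨ ∀ x : M, r • x ∈ Q₁) ∧
     (∀ (r : R) (m : M), r • m ∈ Q₂ → m ∈ Q₂ ∨ ∀ x : M, r • x ∈ Q₂)) ∨
    (∀ (a b : R) (m : M), (a * b) • m ∈ N → a • m ∈ N ∨ b • m ∈ N) := by
  have star : ∀ (r : R) (m : M) (t : ℕ), 0 < t → r ^ t • m ∈ N → r • m ∈ N := by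
    intro r m t ht h
    rw [← henv]
    exact Submodule.subset_span ⟨r, m, t, ht, h, rfl⟩
  have memp₁ : ∀ r : R, r ∈ p₁ ↔ ∃ n : ℕ, ∀ x : M, r ^ n • x ∈ Q₁ := by
    intro r
    rw [← hrad₁]
    constructor
    · rintro ⟨n, hn⟩
      exact ⟨n, fun x => Submodule.mem_colon.mp hn x trivial⟩
    · rintro ⟨n, hn⟩
      exact ⟨n, Submodule.mem_colon.mpr fun x _ => hn x⟩
  have memp₂ : ∀ r : R, r ∈ p₂ ↔ ∃ n : ℕ, ∀ x : M, r ^ n • x ∈ Q₂ := by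
    intro r
    rw [← hrad₂]
    constructor
    · rintro ⟨n, hn⟩
      exact ⟨n, fun x => Submodule.mem_colon.mp hn x trivial⟩
    · rintro ⟨n, hn⟩
      exact ⟨n, Submodule.mem_colon.mpr fun x _ => hn x⟩
  have hdecomp' : N = Q₂ ⊓ Q₁ := by rw [hdecomp, inf_comm]
  by_cases h12 : p₁ ≤ p₂
  · exact Or.inr (weakAux N Q₁ Q₂ p₁ p₂ hprimary₁.2 hprimary₂.2 memp₁ memp₂ h12 hdecomp star)
  by_cases h21 : p₂ ≤ p₁
  · exact Or.inr fun a b m h =>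
      weakAux N Q₂ Q₁ p₂ p₁ hprimary₂.2 hprimary₁.2 memp₂ memp₁ h21 hdecomp' star a b m h
  · left
    obtain ⟨s, hs₂, hs₁⟩ := Set.not_subset.mp h21
    obtain ⟨s', hs'₁, hs'₂⟩ := Set.not_subset.mp h12
    constructor
    · exact primeAux N Q₁ Q₂ p₁ p₂ hprimary₁.2 memp₁ memp₂ s hs₂ hs₁ hdecomp star
    · exact primeAux N Q₂ Q₁ p₂ p₁ hprimary₂.2 memp₂ memp₁ s' hs'₁ hs'₂ hdecomp' star
end

section
/- Let N be a weakly primary submodule of M. Then N is semiprime if and only if N is weakly prime. -/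
/-- Let `N` be a weakly primary submodule of `M`. Then `N` is semiprime if
and only if `N` is weakly prime. -/
theorem weakly_primary_semiprime_iff_weakly_prime
    {R M : Type*} [CommRing R] [IsNoetherianRing R]
    [AddCommGroup M] [Module R M] [Module.Finite R M]
    (N : Submodule R M) (hN : N ≠ ⊤)
    -- `N` is weakly primary
    (hwp : ∀ (a b : R) (m : M), (a * b) • m ∈ N →
        b • m ∈ N ∨ ∃ t : ℕ, 0 < t ∧ a ^ t • m ∈ N) :
    (∀ (r : R) (m : M) (k : ℕ), 0 < k → r ^ k • m ∈ N → r • m ∈ N) ↔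
      (∀ (a b : R) (m : M), (a * b) • m ∈ N → a • m ∈ N ∨ b • m ∈ N) := by
  constructor
  · intro hsp a b m hab
    rcases hwp a b m hab with h | ⟨t, ht, h⟩
    · exact Or.inr h
    · exact Or.inl (hsp a m t ht h)
  · intro hwpr r m k hk h
    induction k with
    | zero => exact absurd hk (lt_irrefl 0)
    | succ n ih =>
      rcases Nat.eq_zero_or_pos n with hn | hn
      · subst hn; simpa using h
      · have : (r * r ^ n) • m ∈ N := by rw [← pow_succ']; exact h
        rcases hwpr r (r ^ n) m this with h' | h'
        · exact h'
        · exact ih hn h'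
end

section
/- Let P be a weakly prime submodule of M containing N and let p_1 be the isolated prime of P. Then wcl_{p_1}(N + p_1 M) ⊆ P. -/
/-!
Since `P` is weakly prime, the colon ideal `(P : m)` of every `m ∉ P` is prime, so the associated
primes of `M ⧸ P` are exactly these colon ideals, and any two colon ideals are comparable
(test `a * b` on `m + m'`). Hence for `m ∉ P` either `p₁ ≤ (P : m)`, or `(P : m) ≤ p₁` and then
minimality of `p₁` forces equality; in both cases `p₁ m ⊆ P`, so `N + p₁ M ≤ P`. Finally a weakly
prime `P` contains `r m` whenever it contains `r ^ k m`, so every iterated envelope of a submodule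
of `P` stays inside `P`.
-/

section

variable {R M : Type*} [CommRing R] [AddCommGroup M] [Module R M]

/-- The submodule generated by the envelope of `N` in `M`. -/
def envSub (N : Submodule R M) : Submodule R M :=
  Submodule.span R {x : M | ∃ (r : R) (m : M) (k : ℕ), 0 < k ∧ r ^ k • m ∈ N ∧ x = r • m}

/-- The iterated envelopes: `⟨E_0(N)⟩ = N`, `⟨E_{n+1}(N)⟩ = ⟨E_M(⟨E_n(N)⟩)⟩`. -/
def iterEnv (N : Submodule R M) : ℕ → Submodule R M
  | 0 => N
  | n + 1 => envSub (iterEnv N n)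

/-- The union of envelopes `UE_M(N) = ⋃_n ⟨E_n(N)⟩`; for a submodule `K` with
`(K : M) = p` prime this is the weakly `p`-closure `wcl_p(K)`. -/
def unionEnv (N : Submodule R M) : Submodule R M := ⨆ n, iterEnv N n

section

open Submodule

variable {P : Submodule R M}

theorem smul_mem_of_pow_smul_mem_of_weaklyPrime
    (hwp : ∀ (a b : R) (m : M), (a * b) • m ∈ P → a • m ∈ P ∨ b • m ∈ P)
    {r : R} {m : M} {k : ℕ} (hk : 0 < k) (h : r ^ k • m ∈ P) : r • m ∈ P := by
  induction k, hk using Nat.le_induction with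
  | base => simpa using h
  | succ n _ ih =>
    rw [pow_succ] at h
    exact (hwp _ _ _ h).elim ih id

theorem envSub_le_of_weaklyPrime
    (hwp : ∀ (a b : R) (m : M), (a * b) • m ∈ P → a • m ∈ P ∨ b • m ∈ P)
    {K : Submodule R M} (hK : K ≤ P) : envSub K ≤ P := by
  rw [envSub, span_le]
  rintro _ ⟨r, m, k, hk, hmem, rfl⟩
  exact smul_mem_of_pow_smul_mem_of_weaklyPrime hwp hk (hK hmem)

theorem unionEnv_le_of_weaklyPrime
    (hwp : ∀ (a b : R) (m : M), (a * b) • m ∈ P → a • m ∈ P ∨ b • m ∈ P)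
    {K : Submodule R M} (hK : K ≤ P) : unionEnv K ≤ P :=
  iSup_le fun n => by
    induction n with
    | zero => exact hK
    | succ n ih => exact envSub_le_of_weaklyPrime hwp ih

theorem colon_isPrime_of_weaklyPrime
    (hwp : ∀ (a b : R) (m : M), (a * b) • m ∈ P → a • m ∈ P ∨ b • m ∈ P)
    {m : M} (hm : m ∉ P) : (P.colon {m}).IsPrime where
  ne_top' h := hm <| by simpa using mem_colon_singleton.mp ((Ideal.eq_top_iff_one _).mp h)
  mem_or_mem' {a b} hab := by
    simp only [mem_colon_singleton] at hab ⊢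
    exact hwp a b m hab

theorem colon_le_or_le_of_weaklyPrime
    (hwp : ∀ (a b : R) (m : M), (a * b) • m ∈ P → a • m ∈ P ∨ b • m ∈ P) (m m' : M) :
    P.colon {m} ≤ P.colon {m'} ∨ P.colon {m'} ≤ P.colon {m} := by
  by_contra! h
  obtain ⟨⟨a, ham, ham'⟩, ⟨b, hbm', hbm⟩⟩ :=
    And.imp SetLike.not_le_iff_exists.mp SetLike.not_le_iff_exists.mp h
  rw [mem_colon_singleton] at ham ham' hbm hbm'
  have hab : (a * b) • (m + m') ∈ P := by
    rw [smul_add, mul_smul, mul_smul, smul_comm a b m]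
    exact P.add_mem (P.smul_mem b ham) (P.smul_mem a hbm')
  rcases hwp a b _ hab with h | h
  · rw [smul_add] at h
    exact ham' ((P.add_mem_iff_right ham).mp h)
  · rw [smul_add] at h
    exact hbm ((P.add_mem_iff_left hbm').mp h)

theorem bot_colon_quotient_mk (P : Submodule R M) (m : M) :
    (⊥ : Submodule R (M ⧸ P)).colon {Submodule.Quotient.mk m} = P.colon {m} := by
  ext r
  rw [mem_colon_singleton, mem_colon_singleton, mem_bot, ← Quotient.mk_smul,
    Quotient.mk_eq_zero]

theorem colon_mem_associatedPrimes_of_weaklyPrime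
    (hwp : ∀ (a b : R) (m : M), (a * b) • m ∈ P → a • m ∈ P ∨ b • m ∈ P)
    {m : M} (hm : m ∉ P) : P.colon {m} ∈ associatedPrimes R (M ⧸ P) :=
  have := colon_isPrime_of_weaklyPrime hwp hm
  ⟨this, Submodule.Quotient.mk m, by rw [bot_colon_quotient_mk, this.radical]⟩

theorem exists_eq_colon_of_mem_associatedPrimes_of_weaklyPrime
    (hwp : ∀ (a b : R) (m : M), (a * b) • m ∈ P → a • m ∈ P ∨ b • m ∈ P)
    {p : Ideal R} (hp : p ∈ associatedPrimes R (M ⧸ P)) : ∃ m ∉ P, p = P.colon {m} := by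
  obtain ⟨hprime, x, hx⟩ := hp
  obtain ⟨m, rfl⟩ := Submodule.Quotient.mk_surjective P x
  rw [bot_colon_quotient_mk] at hx
  have hm : m ∉ P := fun hm => hprime.ne_top <| by
    rw [hx, (P.colon_eq_top_iff_subset {m}).mpr (by simpa), Ideal.radical_top]
  exact ⟨m, hm, hx.trans (colon_isPrime_of_weaklyPrime hwp hm).radical⟩

theorem smul_top_le_of_minimal_associatedPrime_of_weaklyPrime
    (hwp : ∀ (a b : R) (m : M), (a * b) • m ∈ P → a • m ∈ P ∨ b • m ∈ P)
    {p : Ideal R} (hp : p ∈ associatedPrimes R (M ⧸ P))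
    (hmin : ∀ q ∈ associatedPrimes R (M ⧸ P), q ≤ p → q = p) :
    p • (⊤ : Submodule R M) ≤ P := by
  obtain ⟨m₁, -, rfl⟩ := exists_eq_colon_of_mem_associatedPrimes_of_weaklyPrime hwp hp
  refine smul_le.mpr fun r hr m _ => ?_
  by_cases hm : m ∈ P
  · exact P.smul_mem r hm
  have hle : P.colon {m₁} ≤ P.colon {m} := by
    rcases colon_le_or_le_of_weaklyPrime hwp m₁ m with h | h
    · exact h
    · exact (hmin _ (colon_mem_associatedPrimes_of_weaklyPrime hwp hm) h).ge
  exact mem_colon_singleton.mp (hle hr)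

end

theorem weakly_closure_le_weakly_prime_general
    (N P : Submodule R M) (hNP : N ≤ P)
    -- `P` is weakly prime
    (hwp : ∀ (a b : R) (m : M), (a * b) • m ∈ P → a • m ∈ P ∨ b • m ∈ P)
    -- `p₁` is the isolated prime of `P`: the unique minimal associated prime of `M/P`
    (p₁ : Ideal R)
    (hiso : p₁ ∈ associatedPrimes R (M ⧸ P) ∧
        ∀ q ∈ associatedPrimes R (M ⧸ P), q ≤ p₁ → q = p₁) :
    unionEnv (N ⊔ p₁ • (⊤ : Submodule R M)) ≤ P :=
  unionEnv_le_of_weaklyPrime hwp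
    (sup_le hNP (smul_top_le_of_minimal_associatedPrime_of_weaklyPrime hwp hiso.1 hiso.2))

/-- Let `P` be a weakly prime submodule of `M` containing `N` and let `p₁`
be the isolated prime of `P`. Then `wcl_{p₁}(N + p₁M) ⊆ P`. -/
theorem weakly_closure_le_weakly_prime
    [IsNoetherianRing R] [Module.Finite R M]
    (N P : Submodule R M) (hNP : N ≤ P)
    -- `P` is weakly prime
    (hP : P ≠ ⊤)
    (hwp : ∀ (a b : R) (m : M), (a * b) • m ∈ P → a • m ∈ P ∨ b • m ∈ P)
    -- `p₁` is the isolated prime of `P`: the unique minimal associated prime of `M/P`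
    (p₁ : Ideal R)
    (hiso : p₁ ∈ associatedPrimes R (M ⧸ P) ∧
        ∀ q ∈ associatedPrimes R (M ⧸ P), q ≤ p₁ → q = p₁)
    (huniq : ∀ q ∈ associatedPrimes R (M ⧸ P),
        (∀ q' ∈ associatedPrimes R (M ⧸ P), q' ≤ q → q' = q) → q = p₁) :
    unionEnv (N ⊔ p₁ • (⊤ : Submodule R M)) ≤ P :=
  weakly_closure_le_weakly_prime_general N P hNP hwp p₁ hiso

end
end

section
/- If P_1 and P_2 are weakly primary submodules of M containing N with isolated primes p_1 and p_2 respectively, and p_1 ⊆ p_2, then wcl_{p_1}(N + p_1 M) ⊆ wcl_{p_2}(N + p_2 M). -/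
section

variable {R M : Type*} [CommRing R] [AddCommGroup M] [Module R M]

lemma envSub_mono {N N' : Submodule R M} (h : N ≤ N') : envSub N ≤ envSub N' :=
  Submodule.span_mono (fun x ⟨r, m, k, hk, hm, hx⟩ => ⟨r, m, k, hk, h hm, hx⟩)

lemma iterEnv_mono {N N' : Submodule R M} (h : N ≤ N') (n : ℕ) :
    iterEnv N n ≤ iterEnv N' n := by
  induction n with
  | zero => exact h
  | succ n ih => exact envSub_mono ih

lemma unionEnv_mono {N N' : Submodule R M} (h : N ≤ N') : unionEnv N ≤ unionEnv N' :=
  iSup_mono (iterEnv_mono h)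

/-- If `P₁` and `P₂` are weakly primary submodules containing `N` with
isolated primes `p₁` and `p₂` respectively and `p₁ ⊆ p₂`, then
`wcl_{p₁}(N + p₁M) ⊆ wcl_{p₂}(N + p₂M)`. -/
theorem weakly_closure_mono
    [IsNoetherianRing R] [Module.Finite R M]
    (N P₁ P₂ : Submodule R M) (hNP₁ : N ≤ P₁) (hNP₂ : N ≤ P₂)
    -- `P₁` and `P₂` are weakly primary
    (hP₁ : P₁ ≠ ⊤) (hP₂ : P₂ ≠ ⊤)
    (hwp₁ : ∀ (a b : R) (m : M), (a * b) • m ∈ P₁ →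
        b • m ∈ P₁ ∨ ∃ t : ℕ, 0 < t ∧ a ^ t • m ∈ P₁)
    (hwp₂ : ∀ (a b : R) (m : M), (a * b) • m ∈ P₂ →
        b • m ∈ P₂ ∨ ∃ t : ℕ, 0 < t ∧ a ^ t • m ∈ P₂)
    -- `pᵢ` is the isolated prime of `Pᵢ`: the unique minimal associated prime of `M/Pᵢ`
    (p₁ p₂ : Ideal R)
    (hiso₁ : p₁ ∈ associatedPrimes R (M ⧸ P₁) ∧
        ∀ q ∈ associatedPrimes R (M ⧸ P₁), q ≤ p₁ → q = p₁)
    (huniq₁ : ∀ q ∈ associatedPrimes R (M ⧸ P₁),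
        (∀ q' ∈ associatedPrimes R (M ⧸ P₁), q' ≤ q → q' = q) → q = p₁)
    (hiso₂ : p₂ ∈ associatedPrimes R (M ⧸ P₂) ∧
        ∀ q ∈ associatedPrimes R (M ⧸ P₂), q ≤ p₂ → q = p₂)
    (huniq₂ : ∀ q ∈ associatedPrimes R (M ⧸ P₂),
        (∀ q' ∈ associatedPrimes R (M ⧸ P₂), q' ≤ q → q' = q) → q = p₂)
    (hle : p₁ ≤ p₂) :
    unionEnv (N ⊔ p₁ • (⊤ : Submodule R M)) ≤ unionEnv (N ⊔ p₂ • (⊤ : Submodule R M)) := by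
  exact unionEnv_mono (sup_le_sup_left (Submodule.smul_mono_left hle) N)

end
end
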